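/- arXiv:2306.17210 — 3 statements merged into one kernel-verified Lean document; each statement's English description precedes it below -/
import Mathlib

section
/- Let μ be a probability measure on real fields on the d-dimensional discrete torus that is invariant under point reflection x ↦ (u ↦ x(−u)). Let ψ, ψ' be complex kernels satisfying the Hermitian symmetry ψ(−u) = conj(ψ(u)) and ψ'(−u) = conj(ψ'(u)) for all u. Then, assuming integrability, the third-order scattering moment at the origin is real: Im E_μ[ |(x⋆ψ)(0)| · conj((x⋆ψ')(0)) ] = 0. -/
/-! Point reflection `x ↦ x ∘ Neg` turns `(x⋆ψ)(0)` into its conjugate when `ψ` is Hermitian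
symmetric, and hence turns `|(x⋆ψ)(0)| · conj((x⋆ψ')(0))` into its conjugate. A reflection
invariant law therefore gives this moment the same expectation as its conjugate, so the
expectation is real. -/

open MeasureTheory Complex

/-- Convolution of a real field on the `d`-dimensional discrete torus with a complex
kernel: `(x⋆ψ)(u) = Σ_{u'} x(u')·ψ(u − u')`. -/
noncomputable def conv (d L : ℕ) [NeZero L] (x : (Fin d → ZMod L) → ℝ)
    (ψ : (Fin d → ZMod L) → ℂ) (u : Fin d → ZMod L) : ℂ :=
  ∑ u' : Fin d → ZMod L, (x u' : ℂ) * ψ (u - u')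

open ComplexConjugate

theorem measurableEmbedding_comp_neg {G β : Type*} [InvolutiveNeg G] [MeasurableSpace β] :
    MeasurableEmbedding (fun (x : G → β) u => x (-u)) :=
  (MeasurableEquiv.ofInvolutive _ (fun x => funext fun u => by simp only [neg_neg])
    (measurable_pi_lambda _ fun u => measurable_pi_apply (-u))).measurableEmbedding

theorem im_integral_eq_zero_of_comp_eq_conj {α : Type*} [MeasurableSpace α] {μ : Measure α}
    {T : α → α} (hT : MeasurableEmbedding T) (hμ : μ.map T = μ) {f : α → ℂ}
    (hf : ∀ x, f (T x) = conj (f x)) : (∫ x, f x ∂μ).im = 0 := by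
  rw [← conj_eq_iff_im, ← integral_conj]
  calc ∫ x, conj (f x) ∂μ = ∫ x, f (T x) ∂μ := by simp only [hf]
    _ = ∫ y, f y ∂μ.map T := (hT.integral_map f).symm
    _ = ∫ y, f y ∂μ := by rw [hμ]

theorem conv_comp_neg_zero {d L : ℕ} [NeZero L] (x : (Fin d → ZMod L) → ℝ)
    {ψ : (Fin d → ZMod L) → ℂ} (hψ : ∀ u, ψ (-u) = conj (ψ u)) :
    conv d L (fun u => x (-u)) ψ 0 = conj (conv d L x ψ 0) := by
  rw [conv, conv, map_sum]
  refine Fintype.sum_equiv (Equiv.neg _) _ _ fun u => ?_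
  simp only [Equiv.neg_apply, neg_neg, zero_sub, map_mul, conj_ofReal, hψ]

theorem stmt_10_general (d L : ℕ) [NeZero L]
    (μ : Measure ((Fin d → ZMod L) → ℝ))
    (hrefl : μ.map (fun x : (Fin d → ZMod L) → ℝ => fun u => x (-u)) = μ)
    (ψ ψ' : (Fin d → ZMod L) → ℂ)
    (hψ : ∀ u, ψ (-u) = (starRingEnd ℂ) (ψ u))
    (hψ' : ∀ u, ψ' (-u) = (starRingEnd ℂ) (ψ' u)) :
    (∫ x, ((‖conv d L x ψ 0‖ : ℝ) : ℂ) *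
        (starRingEnd ℂ) (conv d L x ψ' 0) ∂μ).im = 0 :=
  im_integral_eq_zero_of_comp_eq_conj measurableEmbedding_comp_neg hrefl fun x => by
    simp only [conv_comp_neg_zero x hψ, conv_comp_neg_zero x hψ', norm_conj, map_mul,
      conj_ofReal]

/-- If the distribution of a field is invariant under point reflection and the kernels
are Hermitian symmetric, the third-order scattering moment at the origin is real. -/
theorem stmt_10 (d L : ℕ) [NeZero L] (hL : 1 ≤ L)
    (μ : Measure ((Fin d → ZMod L) → ℝ)) [IsProbabilityMeasure μ]
    (hrefl : μ.map (fun x : (Fin d → ZMod L) → ℝ => fun u => x (-u)) = μ)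
    (ψ ψ' : (Fin d → ZMod L) → ℂ)
    (hψ : ∀ u, ψ (-u) = (starRingEnd ℂ) (ψ u))
    (hψ' : ∀ u, ψ' (-u) = (starRingEnd ℂ) (ψ' u))
    (hint : Integrable
      (fun x => ((‖conv d L x ψ 0‖ : ℝ) : ℂ) *
        (starRingEnd ℂ) (conv d L x ψ' 0)) μ) :
    (∫ x, ((‖conv d L x ψ 0‖ : ℝ) : ℂ) *
        (starRingEnd ℂ) (conv d L x ψ' 0) ∂μ).im = 0 :=
  stmt_10_general d L μ hrefl ψ ψ' hψ hψ'
end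

section
/- Let μ be a probability measure on real fields on the d-dimensional discrete torus that is invariant under point reflection x ↦ (u ↦ x(−u)). Let ψ, ψ', γ be complex kernels each satisfying the Hermitian symmetry κ(−u) = conj(κ(u)) for all u. Then, assuming integrability, the fourth-order scattering spectrum coefficient at the origin is real: Im E_μ[ ((|x⋆ψ|)⋆γ)(0) · conj( ((|x⋆ψ'|)⋆γ)(0) ) ] = 0, where |x⋆ψ| denotes the field u ↦ |(x⋆ψ)(u)|. -/
/-!
Point reflection `R x = x ∘ neg` of the field and Hermitian symmetry of a kernel together
conjugate a convolution: `(R x ⋆ ψ)(v) = conj ((x ⋆ ψ)(-v))`. Applied twice, the coefficient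
`F x = ((|x⋆ψ|)⋆γ)(0) · conj(((|x⋆ψ'|)⋆γ)(0))` satisfies `F (R x) = conj (F x)`, so invariance of
`μ` under `R` gives `E_μ[F] = conj E_μ[F]`.
-/

open MeasureTheory Complex

open ComplexConjugate

theorem integral_im_eq_zero_of_comp_eq_conj {α : Type*} [MeasurableSpace α] {μ : Measure α}
    (e : α ≃ᵐ α) (he : μ.map e = μ) {f : α → ℂ} (hf : ∀ x, f (e x) = conj (f x)) :
    (∫ x, f x ∂μ).im = 0 := by
  refine conj_eq_iff_im.mp (Eq.symm ?_)
  calc ∫ x, f x ∂μ = ∫ x, f x ∂(μ.map e) := by rw [he]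
    _ = ∫ x, f (e x) ∂μ := integral_map_equiv e f
    _ = ∫ x, conj (f x) ∂μ := by simp_rw [hf]
    _ = conj (∫ x, f x ∂μ) := integral_conj

section Reflection

variable {d L : ℕ} [NeZero L] {ψ : (Fin d → ZMod L) → ℂ}

theorem conv_comp_neg (hψ : ∀ u, ψ (-u) = conj (ψ u)) (x : (Fin d → ZMod L) → ℝ)
    (v : Fin d → ZMod L) :
    conv d L (fun u => x (-u)) ψ v = conj (conv d L x ψ (-v)) := by
  rw [conv, conv, map_sum]
  refine Fintype.sum_equiv (Equiv.neg _) _ _ fun w => ?_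
  rw [Equiv.neg_apply, map_mul, conj_ofReal, ← hψ, neg_sub, sub_neg_eq_add, neg_add_eq_sub]

theorem conv_norm_conv_comp_neg_zero {γ : (Fin d → ZMod L) → ℂ}
    (hψ : ∀ u, ψ (-u) = conj (ψ u)) (hγ : ∀ u, γ (-u) = conj (γ u))
    (x : (Fin d → ZMod L) → ℝ) :
    conv d L (fun v => ‖conv d L (fun u => x (-u)) ψ v‖) γ 0
      = conj (conv d L (fun v => ‖conv d L x ψ v‖) γ 0) := by
  simp_rw [conv_comp_neg hψ, norm_conj]
  rw [conv_comp_neg hγ (fun v => ‖conv d L x ψ v‖), neg_zero]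

end Reflection

theorem stmt_11_general (d L : ℕ) [NeZero L]
    (μ : Measure ((Fin d → ZMod L) → ℝ))
    (hrefl : μ.map (fun x : (Fin d → ZMod L) → ℝ => fun u => x (-u)) = μ)
    (ψ ψ' γ : (Fin d → ZMod L) → ℂ)
    (hψ : ∀ u, ψ (-u) = (starRingEnd ℂ) (ψ u))
    (hψ' : ∀ u, ψ' (-u) = (starRingEnd ℂ) (ψ' u))
    (hγ : ∀ u, γ (-u) = (starRingEnd ℂ) (γ u)) :
    (∫ x, conv d L (fun v => ‖conv d L x ψ v‖) γ 0 *
        (starRingEnd ℂ) (conv d L (fun v => ‖conv d L x ψ' v‖) γ 0) ∂μ).im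
      = 0 := by
  refine integral_im_eq_zero_of_comp_eq_conj
    (MeasurableEquiv.arrowCongr' (Equiv.neg _) (MeasurableEquiv.refl ℝ)) hrefl fun x => ?_
  change conv d L (fun v => ‖conv d L (fun u => x (-u)) ψ v‖) γ 0 *
      conj (conv d L (fun v => ‖conv d L (fun u => x (-u)) ψ' v‖) γ 0) = _
  rw [conv_norm_conv_comp_neg_zero hψ hγ, conv_norm_conv_comp_neg_zero hψ' hγ, map_mul]

/-- If the distribution of a field is invariant under point reflection and the kernels
are Hermitian symmetric, the fourth-order scattering spectrum coefficient at the origin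
is real. -/
theorem stmt_11 (d L : ℕ) [NeZero L] (hL : 1 ≤ L)
    (μ : Measure ((Fin d → ZMod L) → ℝ)) [IsProbabilityMeasure μ]
    (hrefl : μ.map (fun x : (Fin d → ZMod L) → ℝ => fun u => x (-u)) = μ)
    (ψ ψ' γ : (Fin d → ZMod L) → ℂ)
    (hψ : ∀ u, ψ (-u) = (starRingEnd ℂ) (ψ u))
    (hψ' : ∀ u, ψ' (-u) = (starRingEnd ℂ) (ψ' u))
    (hγ : ∀ u, γ (-u) = (starRingEnd ℂ) (γ u))
    (hint : Integrable
      (fun x => conv d L (fun v => ‖conv d L x ψ v‖) γ 0 *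
        (starRingEnd ℂ) (conv d L (fun v => ‖conv d L x ψ' v‖) γ 0)) μ) :
    (∫ x, conv d L (fun v => ‖conv d L x ψ v‖) γ 0 *
        (starRingEnd ℂ) (conv d L (fun v => ‖conv d L x ψ' v‖) γ 0) ∂μ).im
      = 0 :=
  stmt_11_general d L μ hrefl ψ ψ' γ hψ hψ' hγ
end

section
/- Let x : ℝ^d → ℂ be integrable, let ψ be integrable and bounded, let φ be bounded and measurable, and let r be a linear isometry equivalence of ℝ^d. Then the second-layer scattering coefficients are equivariant under rotation: for every u ∈ ℝ^d, ( |(x∘r⁻¹) ⋆ (ψ∘r⁻¹)| ⋆ (φ∘r⁻¹) )(u) = ( |x⋆ψ| ⋆ φ )(r⁻¹ u), where |x⋆ψ| denotes the function v ↦ |(x⋆ψ)(v)|. -/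
open MeasureTheory

/-- Rotation equivariance of second-layer scattering coefficients on `ℝ^d`:
`(|(x∘r⁻¹)⋆(ψ∘r⁻¹)| ⋆ (φ∘r⁻¹))(u) = (|x⋆ψ|⋆φ)(r⁻¹u)`. -/
theorem stmt_15 (d : ℕ)
    (x ψ φ : EuclideanSpace ℝ (Fin d) → ℂ)
    (hx : Integrable x)
    (hψ : Integrable ψ) (Cψ : ℝ) (hψ_bd : ∀ v, ‖ψ v‖ ≤ Cψ)
    (hφ_meas : Measurable φ) (Cφ : ℝ) (hφ_bd : ∀ v, ‖φ v‖ ≤ Cφ)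
    (r : EuclideanSpace ℝ (Fin d) ≃ₗᵢ[ℝ] EuclideanSpace ℝ (Fin d))
    (u : EuclideanSpace ℝ (Fin d)) :
    ∫ v, ((‖∫ w, x (r.symm w) * ψ (r.symm (v - w))‖ : ℝ) : ℂ) * φ (r.symm (u - v))
      = ∫ v, ((‖∫ w, x w * ψ (v - w)‖ : ℝ) : ℂ) * φ (r.symm u - v) := by
  have key : ∀ (f : EuclideanSpace ℝ (Fin d) → ℂ), ∫ w, f (r.symm w) = ∫ w, f w := fun f =>
    r.symm.measurePreserving.integral_comp r.symm.toHomeomorph.measurableEmbedding f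
  have h1 : ∀ v, (∫ w, x (r.symm w) * ψ (r.symm v - r.symm w))
      = ∫ w, x w * ψ (r.symm v - w) := fun v =>
    key (fun w => x w * ψ (r.symm v - w))
  calc ∫ v, ((‖∫ w, x (r.symm w) * ψ (r.symm (v - w))‖ : ℝ) : ℂ) * φ (r.symm (u - v))
      = ∫ v, ((‖∫ w, x w * ψ (r.symm v - w)‖ : ℝ) : ℂ) * φ (r.symm u - r.symm v) := by
        simp only [h1, map_sub]
    _ = _ := key (fun v => ((‖∫ w, x w * ψ (v - w)‖ : ℝ) : ℂ) * φ (r.symm u - v))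
end
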